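/- arXiv:2406.02512 — 2 statements merged into one kernel-verified Lean document; each statement's English description precedes it below -/
import Mathlib

section
/- Let Γ^{(k)} be the branch sets with Γ^{(1)} = {0,1}, Γ^{(k)} = {0} ∪ (Γ^{(k-1)})^3, and let ℓ, the counting functions 𝔇(γ) defined by 𝔇(0)=1, 𝔇(1)=1, 𝔇((γ_1,γ_2,γ_3)) = ℓ((γ_1,γ_2,γ_3))·𝔇(γ_1)𝔇(γ_2)𝔇(γ_3), and the multi-index sets ℜ^{(k,γ)} defined by ℜ^{(k,0)} = {0}, ℜ^{(1,1)} = {(1,0,0),(0,1,0),(0,0,1)}, ℜ^{(k,(γ_1,γ_2,γ_3))} = (ℜ^{(k-1,γ_1)} × ℜ^{(k-1,γ_2)} × ℜ^{(k-1,γ_3)}) + 𝔢^{(k,γ)}, where 𝔢^{(k,γ)} consists of all multi-indices of length 2σ(γ) with |α| = 1. Then for every branch γ of the form (γ_1,γ_2,γ_3), the quantity P(γ) := ∑_{α ∈ ℜ^{(k,γ)}} ∏_j α_j! satisfies P(γ) = 3 ℓ(γ) P(γ_1) P(γ_2) P(γ_3). -/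
inductive BranchTree : Type
  | zero : BranchTree
  | one : BranchTree
  | node : BranchTree → BranchTree → BranchTree → BranchTree
  deriving DecidableEq

/-- 2σ: the length of multi-indices attached to a branch. -/
def sigma2 : BranchTree → ℕ
  | .zero => 1
  | .one => 3
  | .node a b c => sigma2 a + sigma2 b + sigma2 c

def ellB : BranchTree → ℕ
  | .zero => 0
  | .one => 1
  | .node a b c => 1 + ellB a + ellB b + ellB c

def Gamma : ℕ → Finset BranchTree
  | 0 => ∅
  | 1 => {BranchTree.zero, BranchTree.one}
  | (n + 2) => insert BranchTree.zero
      (((Gamma (n + 1)) ×ˢ (Gamma (n + 1)) ×ˢ (Gamma (n + 1))).image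
        fun p => BranchTree.node p.1 p.2.1 p.2.2)

/-- The unit multi-indices of length n (multi-indices α with |α| = 1), as lists. -/
def unitIdx (n : ℕ) : Multiset (List ℕ) :=
  (Multiset.range n).map fun j => (List.range n).map fun i => if i = j then 1 else 0

/-- The multi-index sets ℜ^{(k,γ)} (with multiplicity):
ℜ(0) = {0}, ℜ(1) = {(1,0,0),(0,1,0),(0,0,1)},
ℜ((γ₁,γ₂,γ₃)) = ℜ(γ₁)×ℜ(γ₂)×ℜ(γ₃) + {unit multi-indices of length 2σ}. -/
def Rset : BranchTree → Multiset (List ℕ)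
  | .zero => {[0]}
  | .one => {[1, 0, 0], [0, 1, 0], [0, 0, 1]}
  | .node a b c =>
      (Rset a).bind fun x => (Rset b).bind fun y => (Rset c).bind fun z =>
        (unitIdx (sigma2 (.node a b c))).map fun e =>
          List.zipWith (· + ·) (x ++ y ++ z) e

/-- P(γ) = ∑_{α ∈ ℜ(γ)} ∏ⱼ αⱼ!. -/
def Pfun (γ : BranchTree) : ℕ :=
  ((Rset γ).map fun α => (α.map Nat.factorial).prod).sum

/-!
Adding a unit multi-index `e_j` to `α` multiplies `∏ αᵢ!` by `αⱼ + 1`, so summing over all unit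
shifts of a multi-index `α` of length `n` gives `(|α| + n) ∏ αᵢ!`. Every `α ∈ ℜ(γ)` has length
`2σ(γ) = 2ℓ(γ) + 1` and `|α| = ℓ(γ)`, so for `γ = (γ₁, γ₂, γ₃)` the concatenations
`α₁ α₂ α₃` all have `|α| + n = 3(ℓ(γ₁) + ℓ(γ₂) + ℓ(γ₃) + 1) = 3ℓ(γ)`, and the sum factorises.
-/

lemma Multiset.range_succ_eq_map (n : ℕ) :
    Multiset.range (n + 1) = 0 ::ₘ (Multiset.range n).map (· + 1) := by
  simp [Multiset.range, List.range_succ_eq_map]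

lemma unitIdx_succ (n : ℕ) :
    unitIdx (n + 1) = (1 :: List.replicate n 0) ::ₘ (unitIdx n).map (List.cons 0) := by
  simp only [unitIdx, Multiset.range_succ_eq_map, Multiset.map_cons, Multiset.map_map,
    List.range_succ_eq_map]
  congr 1
  · simp [List.eq_replicate_iff]
  · exact Multiset.map_congr rfl fun j _ => by simp

lemma length_of_mem_unitIdx {n : ℕ} {e : List ℕ} (he : e ∈ unitIdx n) : e.length = n := by
  obtain ⟨j, -, rfl⟩ := Multiset.mem_map.1 he
  simp

lemma sum_of_mem_unitIdx {n : ℕ} {e : List ℕ} (he : e ∈ unitIdx n) : e.sum = 1 := by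
  induction n generalizing e with
  | zero => simp [unitIdx] at he
  | succ n ih =>
    rw [unitIdx_succ, Multiset.mem_cons, Multiset.mem_map] at he
    rcases he with rfl | ⟨f, hf, rfl⟩
    · simp
    · simp [ih hf]

lemma zipWith_add_replicate_length_zero (l : List ℕ) :
    List.zipWith (· + ·) l (List.replicate l.length 0) = l := by
  induction l with
  | nil => rfl
  | cons a t ih => simp [List.replicate_succ, ih]

lemma sum_map_prod_factorial_zipWith_unitIdx (x : List ℕ) :
    ((unitIdx x.length).map fun e => ((List.zipWith (· + ·) x e).map Nat.factorial).prod).sum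
      = (x.sum + x.length) * (x.map Nat.factorial).prod := by
  induction x with
  | nil => simp [unitIdx]
  | cons a t ih =>
    have h_first :
        List.zipWith (· + ·) (a :: t) (1 :: List.replicate t.length 0) = (a + 1) :: t := by
      simp [zipWith_add_replicate_length_zero]
    rw [List.length_cons, unitIdx_succ, Multiset.map_cons, Multiset.sum_cons, Multiset.map_map,
      h_first]
    simp only [Function.comp_def, List.zipWith_cons_cons, add_zero, List.map_cons, List.prod_cons,
      Multiset.sum_map_mul_left, ih, List.sum_cons, Nat.factorial_succ]
    ring

lemma length_of_mem_Rset {γ : BranchTree} {α : List ℕ} (h : α ∈ Rset γ) :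
    α.length = sigma2 γ := by
  induction γ generalizing α with
  | zero => rw [Multiset.mem_singleton.1 h]; rfl
  | one => fin_cases h <;> rfl
  | node a b c iha ihb ihc =>
    simp only [Rset, Multiset.mem_bind, Multiset.mem_map] at h
    obtain ⟨x, hx, y, hy, z, hz, e, he, rfl⟩ := h
    simp [length_of_mem_unitIdx he, iha hx, ihb hy, ihc hz, sigma2, add_assoc]

lemma sum_of_mem_Rset {γ : BranchTree} {α : List ℕ} (h : α ∈ Rset γ) : α.sum = ellB γ := by
  induction γ generalizing α with
  | zero => rw [Multiset.mem_singleton.1 h]; rfl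
  | one => fin_cases h <;> rfl
  | node a b c iha ihb ihc =>
    simp only [Rset, Multiset.mem_bind, Multiset.mem_map] at h
    obtain ⟨x, hx, y, hy, z, hz, e, he, rfl⟩ := h
    rw [← List.sum_add_sum_eq_sum_zipWith_of_length_eq]
    · simp only [List.sum_append, iha hx, ihb hy, ihc hz, sum_of_mem_unitIdx he, ellB]
      ring
    · simp [length_of_mem_unitIdx he, length_of_mem_Rset hx, length_of_mem_Rset hy,
        length_of_mem_Rset hz, sigma2, add_assoc]

lemma sigma2_eq_two_mul_ellB_add_one (γ : BranchTree) : sigma2 γ = 2 * ellB γ + 1 := by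
  induction γ with
  | zero => rfl
  | one => rfl
  | node a b c iha ihb ihc => simp only [sigma2, ellB, iha, ihb, ihc]; ring

theorem P_node_recursion_general (a b c : BranchTree) :
    Pfun (BranchTree.node a b c) =
      3 * ellB (BranchTree.node a b c) * (Pfun a * Pfun b * Pfun c) := by
  set F : List ℕ → ℕ := fun α => (α.map Nat.factorial).prod
  have h_shift : ∀ x ∈ Rset a, ∀ y ∈ Rset b, ∀ z ∈ Rset c,
      ((unitIdx (sigma2 (.node a b c))).map fun e => F (List.zipWith (· + ·) (x ++ y ++ z) e)).sum
        = F x * (F y * (F z * (3 * ellB (.node a b c)))) := by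
    intro x hx y hy z hz
    have h_len : (x ++ y ++ z).length = sigma2 (.node a b c) := by
      simp [length_of_mem_Rset hx, length_of_mem_Rset hy, length_of_mem_Rset hz, sigma2, add_assoc]
    rw [← h_len, sum_map_prod_factorial_zipWith_unitIdx, h_len]
    simp only [F, List.sum_append, List.map_append, List.prod_append, sum_of_mem_Rset hx,
      sum_of_mem_Rset hy, sum_of_mem_Rset hz, sigma2_eq_two_mul_ellB_add_one, sigma2, ellB]
    ring
  calc Pfun (.node a b c)
      = ((Rset a).map fun x => ((Rset b).map fun y => ((Rset c).map fun z =>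
          ((unitIdx (sigma2 (.node a b c))).map fun e =>
            F (List.zipWith (· + ·) (x ++ y ++ z) e)).sum).sum).sum).sum := by
        simp only [Pfun, Rset, Multiset.map_bind, Multiset.sum_bind, Multiset.map_map,
          Function.comp_def, F]
    _ = ((Rset a).map fun x => ((Rset b).map fun y => ((Rset c).map fun z =>
          F x * (F y * (F z * (3 * ellB (.node a b c))))).sum).sum).sum :=
        congrArg _ <| Multiset.map_congr rfl fun x hx => congrArg _ <|
          Multiset.map_congr rfl fun y hy => congrArg _ <|
            Multiset.map_congr rfl fun z hz => h_shift x hx y hy z hz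
    _ = 3 * ellB (.node a b c) * (Pfun a * Pfun b * Pfun c) := by
        simp only [Multiset.sum_map_mul_left, Multiset.sum_map_mul_right, Pfun, F]
        ring

theorem P_node_recursion (k : ℕ) (hk : 2 ≤ k) (a b c : BranchTree)
    (ha : a ∈ Gamma (k - 1)) (hb : b ∈ Gamma (k - 1)) (hc : c ∈ Gamma (k - 1)) :
    Pfun (BranchTree.node a b c) =
      3 * ellB (BranchTree.node a b c) * (Pfun a * Pfun b * Pfun c) :=
  P_node_recursion_general a b c
end

section
/- Let ν ≥ 1, 0 < κ ≤ 1, and let 𝔠, 𝔡 : [0,T) × ℤ^ν → ℂ both satisfy: (i) 𝔠(0,n) = 𝔡(0,n) for all n; (ii) there is C₁ > 0 with |𝔠(t,n)|, |𝔡(t,n)| ≤ C₁ e^{-ρ|n|} for all (t,n), where ρ = κ/2; (iii) both satisfy the integral equation 𝔣(t,n) = e^{-i⟨n⟩²t}𝔣(0,n) + i⟨n⟩∫₀ᵗ e^{-i⟨n⟩²(t−s)} ∑_{n_1−n_2+n_3=n} 𝔣(s,n_1) conj(𝔣(s,n_2)) 𝔣(s,n_3) ds. Then for all t with 0 ≤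 t < min{T, 1/(36 C₁² e (12/ρ)^{2ν+1} |ω|)} and all n ∈ ℤ^ν, one has 𝔠(t,n) = 𝔡(t,n). -/
abbrev Triple (ν : ℕ) (n : Fin ν → ℤ) : Type :=
  {p : (Fin ν → ℤ) × (Fin ν → ℤ) × (Fin ν → ℤ) // p.1 - p.2.1 + p.2.2 = n}

noncomputable def frq (ν : ℕ) (ω : Fin ν → ℝ) (n : Fin ν → ℤ) : ℝ :=
  ∑ j, (n j : ℝ) * ω j

/-- ℓ¹ norm on ℤ^ν. -/
noncomputable def l1 (ν : ℕ) (n : Fin ν → ℤ) : ℝ := ∑ j, |(n j : ℝ)|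

noncomputable def NLterm (ν : ℕ) (c : (Fin ν → ℤ) → ℂ) (n : Fin ν → ℤ) : ℂ :=
  ∑' p : Triple ν n,
    c p.val.1 *
      (starRingEnd ℂ) (c p.val.2.1) *
      c p.val.2.2

/-!
The difference of two solutions is estimated in the weighted norm
`sup_n |c(s,n) - d(s,n)| e^{(α₀ - β s)|n|}`, whose decay rate shrinks linearly in time. In the
Duhamel integral the derivative loss `|⟨n⟩| ≤ |ω| |n|` is then paid for by the time integral
`∫₀ˢ e^{β |n| x} dx ≤ e^{β |n| s} / (β |n|)`, while the cubic convolution keeps the rate `α` of the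
difference thanks to `|n| ≤ |n₁| + |n₂| + |n₃|` and the extra decay `ρ - α ≥ ρ / 4` of the two other
factors. One Duhamel step therefore multiplies the weighted difference by a factor `q < 1` for small
times, and iterating forces the difference to vanish.
-/

open MeasureTheory Set Filter Topology Function

noncomputable def expWeight (ν : ℕ) (σ : ℝ) (m : Fin ν → ℤ) : ℝ := Real.exp (-σ * l1 ν m)

section Lattice

variable {ν : ℕ}

lemma l1_nonneg (n : Fin ν → ℤ) : 0 ≤ l1 ν n :=
  Finset.sum_nonneg fun _ _ => abs_nonneg _

lemma l1_cons (k : ℤ) (m : Fin ν → ℤ) : l1 (ν + 1) (Fin.cons k m) = |(k : ℝ)| + l1 ν m := by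
  simp [l1, Fin.sum_univ_succ]

lemma l1_le_of_sub_add_eq {a b c n : Fin ν → ℤ} (h : a - b + c = n) :
    l1 ν n ≤ l1 ν a + l1 ν b + l1 ν c := by
  simp only [l1, ← Finset.sum_add_distrib]
  refine Finset.sum_le_sum fun j _ => ?_
  simpa [← h, sub_eq_add_neg] using abs_add_three (a j : ℝ) (-b j) (c j)

lemma abs_frq_le (ω : Fin ν → ℝ) (n : Fin ν → ℤ) :
    |frq ν ω n| ≤ (∑ j, |ω j|) * l1 ν n := by
  rw [l1, Finset.mul_sum]
  refine (Finset.abs_sum_le_sum_abs _ _).trans (Finset.sum_le_sum fun j _ => ?_)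
  rw [abs_mul, mul_comm]
  exact mul_le_mul_of_nonneg_right
    (Finset.single_le_sum (fun i _ => abs_nonneg (ω i)) (Finset.mem_univ j)) (abs_nonneg _)

lemma expWeight_pos (σ : ℝ) (m : Fin ν → ℤ) : 0 < expWeight ν σ m := Real.exp_pos _

lemma expWeight_le_expWeight {σ σ' : ℝ} (h : σ ≤ σ') (m : Fin ν → ℤ) :
    expWeight ν σ' m ≤ expWeight ν σ m :=
  Real.exp_le_exp.2 (by nlinarith [l1_nonneg m])

lemma expWeight_le_one {σ : ℝ} (hσ : 0 ≤ σ) (m : Fin ν → ℤ) : expWeight ν σ m ≤ 1 := by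
  simpa [expWeight, l1] using expWeight_le_expWeight hσ m

lemma hasSum_exp_neg_mul_abs {σ : ℝ} (hσ : 0 < σ) :
    HasSum (fun k : ℤ => Real.exp (-σ * |(k : ℝ)|))
      ((1 + Real.exp (-σ)) / (1 - Real.exp (-σ))) := by
  have hr1 : Real.exp (-σ) < 1 := Real.exp_lt_one_iff.2 (neg_lt_zero.2 hσ)
  have hgeom := hasSum_geometric_of_lt_one (Real.exp_nonneg (-σ)) hr1
  have hexp : ∀ n : ℕ, Real.exp (-σ) ^ n = Real.exp (-σ * n) := fun n => by
    rw [← Real.exp_nat_mul]; ring_nf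
  convert (hgeom.congr_fun ?_).of_nat_of_neg_add_one
    ((hgeom.mul_left (Real.exp (-σ))).congr_fun ?_) using 1
  · field_simp [(sub_pos.2 hr1).ne']
  · intro n; simp [hexp]
  · intro n
    rw [hexp, ← Real.exp_add]
    simp only [Int.cast_neg, Int.cast_add, Int.cast_natCast, Int.cast_one]
    rw [abs_neg, abs_of_nonneg (by positivity)]
    ring_nf

lemma one_add_exp_neg_div_le {σ : ℝ} (hσ : 0 < σ) (hσ1 : σ ≤ 1) :
    (1 + Real.exp (-σ)) / (1 - Real.exp (-σ)) ≤ 3 / σ := by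
  have hE := Real.add_one_le_exp σ
  have hprod : Real.exp σ * Real.exp (-σ) = 1 := by rw [← Real.exp_add]; simp
  have hr : 0 < 1 - Real.exp (-σ) := sub_pos.2 (Real.exp_lt_one_iff.2 (neg_lt_zero.2 hσ))
  rw [div_le_div_iff₀ hr hσ]
  nlinarith [Real.exp_pos (-σ)]

lemma hasSum_expWeight {σ : ℝ} (hσ : 0 < σ) :
    HasSum (expWeight ν σ) (((1 + Real.exp (-σ)) / (1 - Real.exp (-σ))) ^ ν) := by
  induction ν with
  | zero => simpa [expWeight, l1] using hasSum_fintype (expWeight 0 σ)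
  | succ ν ih =>
    rw [← (Fin.consEquiv fun _ => ℤ).hasSum_iff, pow_succ']
    refine ((hasSum_exp_neg_mul_abs hσ).mul ih
      ((hasSum_exp_neg_mul_abs hσ).summable.mul_of_nonneg ih.summable
        (fun _ => (Real.exp_pos _).le) (fun _ => (Real.exp_pos _).le))).congr_fun fun p => ?_
    obtain ⟨k, m⟩ := p
    change expWeight (ν + 1) σ (Fin.cons k m) = _
    rw [expWeight, expWeight, l1_cons, ← Real.exp_add]
    ring_nf

lemma tsum_expWeight_le {σ : ℝ} (hσ : 0 < σ) (hσ1 : σ ≤ 1) :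
    ∑' m, expWeight ν σ m ≤ (3 / σ) ^ ν := by
  rw [(hasSum_expWeight hσ).tsum_eq]
  have hr := Real.exp_lt_one_iff.2 (neg_lt_zero.2 hσ)
  exact pow_le_pow_left₀ (div_nonneg (by positivity) (sub_pos.2 hr).le)
    (one_add_exp_neg_div_le hσ hσ1) ν

lemma expWeight_mul_mul_le {α ρ : ℝ} {a b c n : Fin ν → ℤ} (hα0 : 0 ≤ α) (hα : α ≤ 3 * ρ / 4)
    (h : l1 ν n ≤ l1 ν a + l1 ν b + l1 ν c) :
    expWeight ν α a * expWeight ν ρ b * expWeight ν ρ c ≤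
      expWeight ν α n * (expWeight ν (ρ / 4) b * expWeight ν (ρ / 4) c) := by
  simp only [expWeight, ← Real.exp_add]
  refine Real.exp_le_exp.2 ?_
  nlinarith [l1_nonneg a, l1_nonneg b, l1_nonneg c, mul_le_mul_of_nonneg_left h hα0,
    mul_le_mul_of_nonneg_right hα (add_nonneg (l1_nonneg b) (l1_nonneg c))]

end Lattice

section Cubic

variable {ν : ℕ} {n : Fin ν → ℤ}

lemma Triple.injective_proj₂₃ : Injective fun p : Triple ν n => (p.1.2.1, p.1.2.2) := by
  rintro ⟨⟨a, b, c⟩, h⟩ ⟨⟨a', b', c'⟩, h'⟩ hq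
  obtain ⟨rfl, rfl⟩ := Prod.mk.inj hq
  have : a = a' := by simpa using h.trans h'.symm
  subst this; rfl

lemma Triple.injective_proj₁₃ : Injective fun p : Triple ν n => (p.1.1, p.1.2.2) := by
  rintro ⟨⟨a, b, c⟩, h⟩ ⟨⟨a', b', c'⟩, h'⟩ hq
  obtain ⟨rfl, rfl⟩ := Prod.mk.inj hq
  have : b = b' := by simpa using h.trans h'.symm
  subst this; rfl

lemma Triple.injective_proj₁₂ : Injective fun p : Triple ν n => (p.1.1, p.1.2.1) := by
  rintro ⟨⟨a, b, c⟩, h⟩ ⟨⟨a', b', c'⟩, h'⟩ hq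
  obtain ⟨rfl, rfl⟩ := Prod.mk.inj hq
  have : c = c' := by simpa using h.trans h'.symm
  subst this; rfl

variable {σ : ℝ} {ι : Type*} {i : ι → (Fin ν → ℤ) × (Fin ν → ℤ)}

lemma hasSum_expWeight_mul_expWeight (hσ : 0 < σ) :
    HasSum (fun q : (Fin ν → ℤ) × (Fin ν → ℤ) => expWeight ν σ q.1 * expWeight ν σ q.2)
      ((∑' m, expWeight ν σ m) ^ 2) := by
  have h := (hasSum_expWeight (ν := ν) hσ).summable
  rw [sq]
  exact h.hasSum.mul h.hasSum (h.mul_of_nonneg h (fun m => (expWeight_pos σ m).le)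
    (fun m => (expWeight_pos σ m).le))

lemma summable_expWeight_mul_comp (hσ : 0 < σ) (hi : Injective i) :
    Summable fun a => expWeight ν σ (i a).1 * expWeight ν σ (i a).2 :=
  (hasSum_expWeight_mul_expWeight hσ).summable.comp_injective hi

lemma tsum_expWeight_mul_comp_le (hσ : 0 < σ) (hi : Injective i) :
    ∑' a, expWeight ν σ (i a).1 * expWeight ν σ (i a).2 ≤ (∑' m, expWeight ν σ m) ^ 2 :=
  (tsum_comp_le_tsum_of_inj (hasSum_expWeight_mul_expWeight hσ).summable
    (fun q => (mul_pos (expWeight_pos σ q.1) (expWeight_pos σ q.2)).le) hi).trans_eq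
    (hasSum_expWeight_mul_expWeight hσ).tsum_eq

lemma norm_mul_conj_mul_le {x y z : ℂ} {a b c : ℝ} (hx : ‖x‖ ≤ a) (hy : ‖y‖ ≤ b)
    (hz : ‖z‖ ≤ c) : ‖x * (starRingEnd ℂ) y * z‖ ≤ a * b * c := by
  rw [norm_mul, norm_mul, Complex.norm_conj]
  have ha := (norm_nonneg x).trans hx
  have hb := (norm_nonneg y).trans hy
  gcongr

variable {C ρ : ℝ} {c d : (Fin ν → ℤ) → ℂ}

lemma norm_cubic_le (hρ : 0 < ρ) (hC : 0 ≤ C) (hc : ∀ m, ‖c m‖ ≤ C * expWeight ν ρ m)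
    (p : Triple ν n) : ‖c p.1.1 * (starRingEnd ℂ) (c p.1.2.1) * c p.1.2.2‖ ≤
      C ^ 3 * (expWeight ν ρ p.1.2.1 * expWeight ν ρ p.1.2.2) :=
  (norm_mul_conj_mul_le ((hc _).trans (mul_le_of_le_one_right hC (expWeight_le_one hρ.le _)))
    (hc _) (hc _)).trans_eq (by ring)

lemma summable_cubic (hρ : 0 < ρ) (hC : 0 ≤ C) (hc : ∀ m, ‖c m‖ ≤ C * expWeight ν ρ m) :
    Summable fun p : Triple ν n => c p.1.1 * (starRingEnd ℂ) (c p.1.2.1) * c p.1.2.2 :=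
  ((summable_expWeight_mul_comp hρ Triple.injective_proj₂₃).mul_left (C ^ 3)).of_norm_bounded
    (norm_cubic_le hρ hC hc)

lemma norm_NLterm_le (hρ : 0 < ρ) (hC : 0 ≤ C) (hc : ∀ m, ‖c m‖ ≤ C * expWeight ν ρ m)
    (n : Fin ν → ℤ) : ‖NLterm ν c n‖ ≤ C ^ 3 * (∑' m, expWeight ν ρ m) ^ 2 := by
  refine (tsum_of_norm_bounded
    ((summable_expWeight_mul_comp hρ Triple.injective_proj₂₃).mul_left (C ^ 3)).hasSum
    (norm_cubic_le hρ hC hc)).trans ?_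
  rw [tsum_mul_left]
  exact mul_le_mul_of_nonneg_left (tsum_expWeight_mul_comp_le hρ Triple.injective_proj₂₃)
    (pow_nonneg hC 3)

lemma norm_NLterm_sub_le {α D : ℝ} (hρ : 0 < ρ) (hC : 0 ≤ C) (hα0 : 0 ≤ α)
    (hα : α ≤ 3 * ρ / 4) (hD : 0 ≤ D)
    (hc : ∀ m, ‖c m‖ ≤ C * expWeight ν ρ m) (hd : ∀ m, ‖d m‖ ≤ C * expWeight ν ρ m)
    (hcd : ∀ m, ‖c m - d m‖ ≤ D * expWeight ν α m) (n : Fin ν → ℤ) :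
    ‖NLterm ν c n - NLterm ν d n‖ ≤
      3 * C ^ 2 * D * (∑' m, expWeight ν (ρ / 4) m) ^ 2 * expWeight ν α n := by
  have hρ4 : 0 < ρ / 4 := by positivity
  set w := expWeight ν (ρ / 4)
  set K := D * C ^ 2 * expWeight ν α n
  have hK : 0 ≤ K := by have := expWeight_pos α n; positivity
  have hslot : ∀ {a b e : Fin ν → ℤ}, l1 ν n ≤ l1 ν a + l1 ν b + l1 ν e →
      D * expWeight ν α a * (C * expWeight ν ρ b) * (C * expWeight ν ρ e) ≤ K * (w b * w e) :=
    fun htri => calc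
      _ = D * C ^ 2 * (expWeight ν α _ * expWeight ν ρ _ * expWeight ν ρ _) := by ring
      _ ≤ D * C ^ 2 * (expWeight ν α n * (w _ * w _)) :=
        mul_le_mul_of_nonneg_left (expWeight_mul_mul_le hα0 hα htri) (by positivity)
      _ = _ := by ring
  have hbound : ∀ p : Triple ν n,
      ‖c p.1.1 * (starRingEnd ℂ) (c p.1.2.1) * c p.1.2.2 -
        d p.1.1 * (starRingEnd ℂ) (d p.1.2.1) * d p.1.2.2‖ ≤
      K * (w p.1.2.1 * w p.1.2.2 + w p.1.1 * w p.1.2.2 + w p.1.1 * w p.1.2.1) := by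
    rintro ⟨⟨p₁, p₂, p₃⟩, hp⟩
    have htri := l1_le_of_sub_add_eq hp
    have hsplit : c p₁ * (starRingEnd ℂ) (c p₂) * c p₃ - d p₁ * (starRingEnd ℂ) (d p₂) * d p₃ =
        (c p₁ - d p₁) * (starRingEnd ℂ) (c p₂) * c p₃ +
          d p₁ * (starRingEnd ℂ) (c p₂ - d p₂) * c p₃ +
          d p₁ * (starRingEnd ℂ) (d p₂) * (c p₃ - d p₃) := by
      simp only [map_sub]; ring
    simp only [hsplit, mul_add]
    refine norm_add₃_le.trans (add_le_add_three ?_ ?_ ?_)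
    · exact (norm_mul_conj_mul_le (hcd p₁) (hc p₂) (hc p₃)).trans (hslot htri)
    · exact (norm_mul_conj_mul_le (hd p₁) (hcd p₂) (hc p₃)).trans
        (le_of_eq_of_le (by ring) (hslot (by linarith)))
    · exact (norm_mul_conj_mul_le (hd p₁) (hd p₂) (hcd p₃)).trans
        (le_of_eq_of_le (by ring) (hslot (by linarith)))
  have h₂₃ := summable_expWeight_mul_comp hρ4 (Triple.injective_proj₂₃ (n := n))
  have h₁₃ := summable_expWeight_mul_comp hρ4 (Triple.injective_proj₁₃ (n := n))
  have h₁₂ := summable_expWeight_mul_comp hρ4 (Triple.injective_proj₁₂ (n := n))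
  rw [NLterm, NLterm, ← (summable_cubic hρ hC hc).tsum_sub (summable_cubic hρ hC hd)]
  refine (tsum_of_norm_bounded (((h₂₃.add h₁₃).add h₁₂).mul_left K).hasSum hbound).trans ?_
  rw [tsum_mul_left, (h₂₃.add h₁₃).tsum_add h₁₂, h₂₃.tsum_add h₁₃]
  calc _ ≤ K * ((∑' m, w m) ^ 2 + (∑' m, w m) ^ 2 + (∑' m, w m) ^ 2) := by
        gcongr
        · exact tsum_expWeight_mul_comp_le hρ4 Triple.injective_proj₂₃
        · exact tsum_expWeight_mul_comp_le hρ4 Triple.injective_proj₁₃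
        · exact tsum_expWeight_mul_comp_le hρ4 Triple.injective_proj₁₂
    _ = _ := by ring

end Cubic

theorem aestronglyMeasurable_primitive {E : Type*} [NormedAddCommGroup E] [NormedSpace ℝ E]
    (f : ℝ → E) (a : ℝ) :
    AEStronglyMeasurable (fun u => ∫ x in a..u, f x) (volume.restrict (Ici a)) := by
  set F := fun u => ∫ x in a..u, f x
  set A := {u | a ≤ u ∧ IntervalIntegrable f volume a u}
  have hA : A.OrdConnected := by
    refine ⟨fun x hx y hy z hz => ⟨hx.1.trans hz.1, hy.2.mono_set ?_⟩⟩
    rw [uIcc_of_le (hx.1.trans hz.1), uIcc_of_le hy.1]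
    exact Icc_subset_Icc_right hz.2
  have hIcc : ∀ u ∈ A, ContinuousOn F (Icc a u) := fun u hu => by
    rw [← uIcc_of_le hu.1]
    exact intervalIntegral.continuousOn_primitive_interval
      ((intervalIntegrable_iff' (μ := volume)).1 hu.2)
  have hcont : ContinuousOn F A := by
    intro u hu
    by_cases hmax : ∃ v ∈ A, u < v
    · obtain ⟨v, hv, huv⟩ := hmax
      exact ((hIcc v hv u ⟨hu.1, huv.le⟩).mono fun z hz => ⟨hz.1.1, hz.2.le⟩)
        |>.mono_of_mem_nhdsWithin (inter_mem_nhdsWithin A (Iio_mem_nhds huv))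
    · push Not at hmax
      exact (hIcc u hu).mono (fun z hz => ⟨hz.1, hmax z hz⟩) u hu
  -- off `A` the primitive takes the junk value `0`
  have hF : A.indicator F =ᵐ[volume.restrict (Ici a)] F := by
    refine (ae_restrict_iff' measurableSet_Ici).2 (ae_of_all _ fun u hu => ?_)
    by_cases huA : u ∈ A
    · exact indicator_of_mem huA F
    · rw [indicator_of_notMem huA, eq_comm]
      exact intervalIntegral.integral_undef fun h => huA ⟨hu, h⟩
  exact (((aestronglyMeasurable_indicator_iff hA.measurableSet).2
    (hcont.aestronglyMeasurable hA.measurableSet)).restrict).congr hF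

lemma mul_integral_exp_mul_le {L β s : ℝ} (hL : 0 ≤ L) (hβ : 0 < β) :
    L * ∫ x in (0 : ℝ)..s, Real.exp (β * L * x) ≤ Real.exp (β * L * s) / β := by
  rcases hL.eq_or_lt with rfl | hL
  · simp only [zero_mul]; positivity
  rw [intervalIntegral.integral_comp_mul_left (fun x => Real.exp x) (by positivity), integral_exp,
    mul_zero, Real.exp_zero, smul_eq_mul]
  calc _ = (Real.exp (β * L * s) - 1) / β := by field_simp
    _ ≤ _ := by gcongr; linarith

def ExpDecayOn (ν : ℕ) (T C ρ : ℝ) (c : ℝ → (Fin ν → ℤ) → ℂ) : Prop :=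
  ∀ t, 0 ≤ t → t < T → ∀ n, ‖c t n‖ ≤ C * expWeight ν ρ n

def IsMildSolution (ν : ℕ) (ω : Fin ν → ℝ) (T : ℝ) (c : ℝ → (Fin ν → ℤ) → ℂ) : Prop :=
  ∀ t, 0 ≤ t → t < T → ∀ n : Fin ν → ℤ, c t n =
    Complex.exp (-Complex.I * ((frq ν ω n : ℝ) : ℂ) ^ 2 * (t : ℂ)) * c 0 n +
      Complex.I * ((frq ν ω n : ℝ) : ℂ) *
        ∫ s in (0 : ℝ)..t,
          Complex.exp (-Complex.I * ((frq ν ω n : ℝ) : ℂ) ^ 2 * ((t : ℂ) - (s : ℂ))) *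
            NLterm ν (c s) n

lemma norm_exp_neg_I_mul (a t s : ℝ) :
    ‖Complex.exp (-Complex.I * (a : ℂ) ^ 2 * ((t : ℂ) - (s : ℂ)))‖ = 1 := by
  have : -Complex.I * (a : ℂ) ^ 2 * ((t : ℂ) - (s : ℂ)) =
      ((-(a ^ 2 * (t - s)) : ℝ) : ℂ) * Complex.I := by
    push_cast; ring
  rw [this, Complex.norm_exp_ofReal_mul_I]

namespace IsMildSolution

variable {ν : ℕ} {ω : Fin ν → ℝ} {T C ρ : ℝ} {c d : ℝ → (Fin ν → ℤ) → ℂ}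

-- Measurability in time is not assumed: on `[0, T)` the solution is a continuous function times
-- a primitive, and a primitive of an arbitrary function is measurable.
theorem aemeasurable (hc : IsMildSolution ν ω T c) (m : Fin ν → ℤ) :
    AEMeasurable (fun u => c u m) (volume.restrict (Ico 0 T)) := by
  set a : ℂ := Complex.I * ((frq ν ω m : ℝ) : ℂ) ^ 2
  have hE : Continuous fun u : ℝ => Complex.exp (-a * u) := by fun_prop
  have hprim := (aestronglyMeasurable_primitive
    (fun x : ℝ => Complex.exp (a * x) * NLterm ν (c x) m) 0).mono_set
    (Ico_subset_Ici_self : Ico 0 T ⊆ Ici 0)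
  refine AEMeasurable.congr (f := fun u : ℝ => Complex.exp (-a * u) * c 0 m +
      Complex.I * frq ν ω m * Complex.exp (-a * u) *
        ∫ x in (0 : ℝ)..u, Complex.exp (a * x) * NLterm ν (c x) m)
    ((hE.aemeasurable.mul_const _).add ((hE.aemeasurable.const_mul _).mul hprim.aemeasurable)) ?_
  refine (ae_restrict_iff' measurableSet_Ico).2 (ae_of_all _ fun u hu => ?_)
  dsimp only
  rw [hc u hu.1 hu.2 m, mul_assoc (Complex.I * _), ← intervalIntegral.integral_const_mul]
  congr 3
  · simp only [a]; ring_nf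
  · ext x
    rw [← mul_assoc, ← Complex.exp_add]
    simp only [a]; ring_nf

theorem aemeasurable_NLterm (hc : IsMildSolution ν ω T c) (n : Fin ν → ℤ) :
    AEMeasurable (fun u => NLterm ν (c u) n) (volume.restrict (Ico 0 T)) :=
  AEMeasurable.tsum fun _ => ((hc.aemeasurable _).mul
    (Complex.continuous_conj.measurable.comp_aemeasurable (hc.aemeasurable _))).mul
    (hc.aemeasurable _)

theorem intervalIntegrable_NLterm (hc : IsMildSolution ν ω T c) (hcb : ExpDecayOn ν T C ρ c)
    (hρ : 0 < ρ) (hC : 0 ≤ C) {s : ℝ} (hs0 : 0 ≤ s) (hsT : s < T) (n : Fin ν → ℤ) :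
    IntervalIntegrable (fun x => NLterm ν (c x) n) volume 0 s := by
  rw [intervalIntegrable_iff_integrableOn_Ioc_of_le hs0]
  have hsub : Ioc 0 s ⊆ Ico 0 T := fun x hx => ⟨hx.1.le, hx.2.trans_lt hsT⟩
  refine Integrable.mono' (integrable_const (C ^ 3 * (∑' m, expWeight ν ρ m) ^ 2))
    ((hc.aemeasurable_NLterm n).mono_set hsub).aestronglyMeasurable ?_
  refine (ae_restrict_iff' measurableSet_Ioc).2 (ae_of_all _ fun x hx => ?_)
  exact norm_NLterm_le hρ hC (hcb x (hsub hx).1 (hsub hx).2) n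

theorem sub_eq_integral (hc : IsMildSolution ν ω T c) (hd : IsMildSolution ν ω T d)
    (hinit : ∀ n, c 0 n = d 0 n) (hcb : ExpDecayOn ν T C ρ c) (hdb : ExpDecayOn ν T C ρ d)
    (hρ : 0 < ρ) (hC : 0 ≤ C) {s : ℝ} (hs0 : 0 ≤ s) (hsT : s < T) (n : Fin ν → ℤ) :
    c s n - d s n = Complex.I * ((frq ν ω n : ℝ) : ℂ) *
      ∫ x in (0 : ℝ)..s,
        Complex.exp (-Complex.I * ((frq ν ω n : ℝ) : ℂ) ^ 2 * ((s : ℂ) - (x : ℂ))) *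
          (NLterm ν (c x) n - NLterm ν (d x) n) := by
  have hE : ContinuousOn (fun x : ℝ =>
      Complex.exp (-Complex.I * ((frq ν ω n : ℝ) : ℂ) ^ 2 * ((s : ℂ) - (x : ℂ)))) (uIcc 0 s) :=
    Continuous.continuousOn (by fun_prop)
  simp only [mul_sub (Complex.exp _) (NLterm ν _ n)]
  rw [intervalIntegral.integral_sub
    ((hc.intervalIntegrable_NLterm hcb hρ hC hs0 hsT n).continuousOn_mul hE)
    ((hd.intervalIntegrable_NLterm hdb hρ hC hs0 hsT n).continuousOn_mul hE),
    hc s hs0 hsT n, hd s hs0 hsT n, hinit n]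
  ring

theorem norm_sub_le_of_norm_sub_le (hc : IsMildSolution ν ω T c) (hd : IsMildSolution ν ω T d)
    (hinit : ∀ n, c 0 n = d 0 n) (hcb : ExpDecayOn ν T C ρ c) (hdb : ExpDecayOn ν T C ρ d)
    (hρ : 0 < ρ) (hC : 0 ≤ C) {s α₀ β D : ℝ} (hs0 : 0 ≤ s) (hsT : s < T) (hβ : 0 < β)
    (hβs : β * s ≤ α₀) (hα₀ : α₀ ≤ 3 * ρ / 4) (hD : 0 ≤ D)
    (hcd : ∀ x ∈ Icc 0 s, ∀ m, ‖c x m - d x m‖ ≤ D * expWeight ν (α₀ - β * x) m)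
    (n : Fin ν → ℤ) :
    ‖c s n - d s n‖ ≤ 3 * C ^ 2 * (∑' m, expWeight ν (ρ / 4) m) ^ 2 * (∑ j, |ω j|) / β * D *
      expWeight ν (α₀ - β * s) n := by
  set L := l1 ν n
  set K := 3 * C ^ 2 * D * (∑' m, expWeight ν (ρ / 4) m) ^ 2 * Real.exp (-α₀ * L)
  have hweight : ∀ x, expWeight ν (α₀ - β * x) n = Real.exp (-α₀ * L) * Real.exp (β * L * x) :=
    fun x => by simp only [expWeight, L, ← Real.exp_add]; ring_nf
  have hpt : ∀ x ∈ Ioc 0 s,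
      ‖Complex.exp (-Complex.I * ((frq ν ω n : ℝ) : ℂ) ^ 2 * ((s : ℂ) - (x : ℂ))) *
        (NLterm ν (c x) n - NLterm ν (d x) n)‖ ≤ K * Real.exp (β * L * x) := by
    intro x hx
    have hxT : x < T := hx.2.trans_lt hsT
    rw [norm_mul, norm_exp_neg_I_mul, one_mul]
    refine (norm_NLterm_sub_le hρ hC (by nlinarith [hx.2]) (by nlinarith [hx.1]) hD
      (hcb x hx.1.le hxT) (hdb x hx.1.le hxT) (hcd x ⟨hx.1.le, hx.2⟩) n).trans_eq ?_
    rw [hweight]; ring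
  have hint := intervalIntegral.norm_integral_le_of_norm_le hs0 (ae_of_all volume hpt)
    (Continuous.intervalIntegrable (by fun_prop) 0 s)
  rw [intervalIntegral.integral_const_mul] at hint
  have hΩ : 0 ≤ ∑ j, |ω j| := Finset.sum_nonneg fun j _ => abs_nonneg (ω j)
  rw [hc.sub_eq_integral hd hinit hcb hdb hρ hC hs0 hsT n, norm_mul]
  calc _ ≤ ((∑ j, |ω j|) * L) * (K * ∫ x in (0 : ℝ)..s, Real.exp (β * L * x)) := by
        refine mul_le_mul ?_ hint (norm_nonneg _) (mul_nonneg hΩ (l1_nonneg n))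
        simpa using abs_frq_le ω n
    _ = (∑ j, |ω j|) * K * (L * ∫ x in (0 : ℝ)..s, Real.exp (β * L * x)) := by ring
    _ ≤ (∑ j, |ω j|) * K * (Real.exp (β * L * s) / β) := by
        gcongr; exact mul_integral_exp_mul_le (l1_nonneg n) hβ
    _ = _ := by rw [hweight]; ring

theorem norm_sub_le_mul_pow (hc : IsMildSolution ν ω T c) (hd : IsMildSolution ν ω T d)
    (hinit : ∀ n, c 0 n = d 0 n) (hcb : ExpDecayOn ν T C ρ c) (hdb : ExpDecayOn ν T C ρ d)
    (hρ : 0 < ρ) (hC : 0 ≤ C) {t : ℝ} (ht : 0 < t) (htT : t < T) (j : ℕ) :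
    ∀ s ∈ Icc 0 t, ∀ m, ‖c s m - d s m‖ ≤
      2 * C * (3 * C ^ 2 * (∑' m, expWeight ν (ρ / 4) m) ^ 2 * (∑ j, |ω j|) / (ρ / (4 * t))) ^ j *
        expWeight ν (3 * ρ / 4 - ρ / (4 * t) * s) m := by
  have hβ : 0 < ρ / (4 * t) := by positivity
  have hβt : ρ / (4 * t) * t = ρ / 4 := by field_simp
  induction j with
  | zero =>
    intro s hs m
    have hsT : s < T := hs.2.trans_lt htT
    calc ‖c s m - d s m‖ ≤ C * expWeight ν ρ m + C * expWeight ν ρ m :=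
          (norm_sub_le _ _).trans (add_le_add (hcb s hs.1 hsT m) (hdb s hs.1 hsT m))
      _ ≤ _ := by
          rw [pow_zero, mul_one, ← two_mul, mul_assoc]
          gcongr
          exact expWeight_le_expWeight (by nlinarith [hs.1]) m
  | succ j ih =>
    intro s hs m
    refine (hc.norm_sub_le_of_norm_sub_le hd hinit hcb hdb hρ hC hs.1 (hs.2.trans_lt htT) hβ
      (by nlinarith [hs.2]) le_rfl (by positivity) (fun x hx => ih x ⟨hx.1, hx.2.trans hs.2⟩)
      m).trans_eq ?_
    ring

end IsMildSolution

lemma contraction_factor_lt_one {ν : ℕ} {ρ C Q Ω t : ℝ} (hρ : 0 < ρ) (hQ0 : 0 ≤ Q)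
    (hQ : Q ≤ (12 / ρ) ^ ν) (hΩ : 0 ≤ Ω) (ht : 0 < t)
    (htlt : t < 1 / (36 * C ^ 2 * Real.exp 1 * (12 / ρ) ^ (2 * ν + 1) * Ω)) :
    3 * C ^ 2 * Q ^ 2 * Ω / (ρ / (4 * t)) < 1 := by
  set Λ := 36 * C ^ 2 * Real.exp 1 * (12 / ρ) ^ (2 * ν + 1) * Ω
  have hΛ : 0 < Λ := by
    by_contra h
    have : 1 / Λ ≤ 0 := div_nonpos_of_nonneg_of_nonpos zero_le_one (not_lt.1 h)
    linarith
  have he : 1 ≤ 36 * Real.exp 1 := by linarith [Real.add_one_le_exp 1]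
  calc 3 * C ^ 2 * Q ^ 2 * Ω / (ρ / (4 * t)) = 12 / ρ * C ^ 2 * Q ^ 2 * Ω * t := by
        field_simp; ring
    _ ≤ 12 / ρ * C ^ 2 * ((12 / ρ) ^ ν) ^ 2 * Ω * t := by gcongr
    _ = Λ * t / (36 * Real.exp 1) := by
        simp only [Λ]; rw [pow_succ (12 / ρ), pow_mul' (12 / ρ)]; field_simp
    _ ≤ Λ * t := div_le_self (by positivity) he
    _ < 1 := (lt_div_iff₀' hΛ).1 (by simpa using htlt)

theorem uniqueness_dNLS_general (ν : ℕ) (κ : ℝ) (hκ : 0 < κ) (hκ1 : κ ≤ 1)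
    (ω : Fin ν → ℝ) (T : ℝ) (C₁ : ℝ) (hC₁ : 0 < C₁)
    (c d : ℝ → (Fin ν → ℤ) → ℂ)
    (hinit : ∀ n : Fin ν → ℤ, c 0 n = d 0 n)
    (hcb : ∀ t, 0 ≤ t → t < T → ∀ n : Fin ν → ℤ,
      ‖c t n‖ ≤ C₁ * Real.exp (-(κ / 2) * l1 ν n))
    (hdb : ∀ t, 0 ≤ t → t < T → ∀ n : Fin ν → ℤ,
      ‖d t n‖ ≤ C₁ * Real.exp (-(κ / 2) * l1 ν n))
    (hci : ∀ t, 0 ≤ t → t < T → ∀ n : Fin ν → ℤ, c t n =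
      Complex.exp (-Complex.I * ((frq ν ω n : ℝ) : ℂ) ^ 2 * (t : ℂ)) * c 0 n +
        Complex.I * ((frq ν ω n : ℝ) : ℂ) *
          ∫ s in (0 : ℝ)..t,
            Complex.exp (-Complex.I * ((frq ν ω n : ℝ) : ℂ) ^ 2 * ((t : ℂ) - (s : ℂ))) *
              NLterm ν (c s) n)
    (hdi : ∀ t, 0 ≤ t → t < T → ∀ n : Fin ν → ℤ, d t n =
      Complex.exp (-Complex.I * ((frq ν ω n : ℝ) : ℂ) ^ 2 * (t : ℂ)) * d 0 n +
        Complex.I * ((frq ν ω n : ℝ) : ℂ) *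
          ∫ s in (0 : ℝ)..t,
            Complex.exp (-Complex.I * ((frq ν ω n : ℝ) : ℂ) ^ 2 * ((t : ℂ) - (s : ℂ))) *
              NLterm ν (d s) n) :
    ∀ t, 0 ≤ t →
      t < min T (1 / (36 * C₁ ^ 2 * Real.exp 1 * (12 / (κ / 2)) ^ (2 * ν + 1) * ∑ j, |ω j|)) →
      ∀ n : Fin ν → ℤ, c t n = d t n := by
  intro t ht0 htlt n
  have hρ : 0 < κ / 2 := by positivity
  have htT : t < T := htlt.trans_le (min_le_left _ _)
  rcases ht0.eq_or_lt with rfl | ht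
  · exact hinit n
  have hQ : ∑' m, expWeight ν (κ / 2 / 4) m ≤ (12 / (κ / 2)) ^ ν := by
    convert tsum_expWeight_le (ν := ν) (σ := κ / 2 / 4) (by positivity) (by linarith) using 2
    field_simp; norm_num
  have hq := contraction_factor_lt_one hρ (tsum_nonneg fun m => (expWeight_pos _ m).le) hQ
    (Finset.sum_nonneg fun j _ => abs_nonneg (ω j)) ht (htlt.trans_le (min_le_right _ _))
  have hlim := ((tendsto_pow_atTop_nhds_zero_of_lt_one (by positivity) hq).const_mul
    (2 * C₁)).mul_const (expWeight ν (3 * (κ / 2) / 4 - κ / 2 / (4 * t) * t) n)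
  have hle := ge_of_tendsto' hlim fun j => IsMildSolution.norm_sub_le_mul_pow hci hdi hinit
    hcb hdb hρ hC₁.le ht htT j t ⟨ht0, le_rfl⟩ n
  simpa [sub_eq_zero] using hle

theorem uniqueness_dNLS (ν : ℕ) (hν : 1 ≤ ν) (κ : ℝ) (hκ : 0 < κ) (hκ1 : κ ≤ 1)
    (ω : Fin ν → ℝ) (T : ℝ) (hT : 0 < T) (C₁ : ℝ) (hC₁ : 0 < C₁)
    (c d : ℝ → (Fin ν → ℤ) → ℂ)
    (hinit : ∀ n : Fin ν → ℤ, c 0 n = d 0 n)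
    (hcb : ∀ t, 0 ≤ t → t < T → ∀ n : Fin ν → ℤ,
      ‖c t n‖ ≤ C₁ * Real.exp (-(κ / 2) * l1 ν n))
    (hdb : ∀ t, 0 ≤ t → t < T → ∀ n : Fin ν → ℤ,
      ‖d t n‖ ≤ C₁ * Real.exp (-(κ / 2) * l1 ν n))
    (hci : ∀ t, 0 ≤ t → t < T → ∀ n : Fin ν → ℤ, c t n =
      Complex.exp (-Complex.I * ((frq ν ω n : ℝ) : ℂ) ^ 2 * (t : ℂ)) * c 0 n +
        Complex.I * ((frq ν ω n : ℝ) : ℂ) *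
          ∫ s in (0 : ℝ)..t,
            Complex.exp (-Complex.I * ((frq ν ω n : ℝ) : ℂ) ^ 2 * ((t : ℂ) - (s : ℂ))) *
              NLterm ν (c s) n)
    (hdi : ∀ t, 0 ≤ t → t < T → ∀ n : Fin ν → ℤ, d t n =
      Complex.exp (-Complex.I * ((frq ν ω n : ℝ) : ℂ) ^ 2 * (t : ℂ)) * d 0 n +
        Complex.I * ((frq ν ω n : ℝ) : ℂ) *
          ∫ s in (0 : ℝ)..t,
            Complex.exp (-Complex.I * ((frq ν ω n : ℝ) : ℂ) ^ 2 * ((t : ℂ) - (s : ℂ))) *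
              NLterm ν (d s) n) :
    ∀ t, 0 ≤ t →
      t < min T (1 / (36 * C₁ ^ 2 * Real.exp 1 * (12 / (κ / 2)) ^ (2 * ν + 1) * ∑ j, |ω j|)) →
      ∀ n : Fin ν → ℤ, c t n = d t n :=
  uniqueness_dNLS_general ν κ hκ hκ1 ω T C₁ hC₁ c d hinit hcb hdb hci hdi
end
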